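/- arXiv:1706.08513 — 2 statements merged into one kernel-verified Lean document; each statement's English description precedes it below -/
import Mathlib

section
/- Let X and Y be real Banach spaces and suppose H : X → X is a C^q map (q ≥ 0, possibly ∞) such that ‖H(x)‖ < N for all x ∈ X and H(x) = x whenever ‖x‖ < n, for some constants N, n > 0. If f is a C^q map defined on an open neighborhood U of 0 in X with values in Y, and the closed ball of radius ε is contained in U, then the map F(x) = f((ε/N)·H((N/ε)·x)) is well-defined on all of X, is C^q, and coincides with f on the open ball of radius εn/N. -/
theorem stmt_0
    {X Y : Type*} [NormedAddCommGroup X] [NormedSpace ℝ X] [CompleteSpace X]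
    [NormedAddCommGroup Y] [NormedSpace ℝ Y] [CompleteSpace Y]
    (q : ℕ∞) (H : X → X) (hH : ContDiff ℝ q H)
    (N n : ℝ) (hN : 0 < N) (hn : 0 < n)
    (hHbdd : ∀ x, ‖H x‖ < N)
    (hHid : ∀ x, ‖x‖ < n → H x = x)
    (U : Set X) (hU : IsOpen U) (hU0 : (0 : X) ∈ U)
    (f : X → Y) (hf : ContDiffOn ℝ q f U)
    (ε : ℝ) (hε : 0 < ε) (hball : Metric.closedBall (0 : X) ε ⊆ U) :
    (∀ x, (ε / N) • H ((N / ε) • x) ∈ U) ∧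
    ContDiff ℝ q (fun x => f ((ε / N) • H ((N / ε) • x))) ∧
    (∀ x, ‖x‖ < ε * n / N → f ((ε / N) • H ((N / ε) • x)) = f x) := by
  have hmem : ∀ x : X, (ε / N) • H ((N / ε) • x) ∈ Metric.ball (0 : X) ε := by
    intro x
    rw [Metric.mem_ball, dist_zero_right, norm_smul, Real.norm_eq_abs,
      abs_of_pos (div_pos hε hN)]
    calc ε / N * ‖H ((N / ε) • x)‖ < ε / N * N :=
          mul_lt_mul_of_pos_left (hHbdd _) (div_pos hε hN)
      _ = ε := div_mul_cancel₀ ε hN.ne'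
  have hsub : Metric.ball (0 : X) ε ⊆ U := fun y hy =>
    hball (Metric.ball_subset_closedBall hy)
  refine ⟨fun x => hsub (hmem x), ?_, ?_⟩
  · have hg : ContDiff ℝ q fun x : X => (ε / N) • H ((N / ε) • x) :=
      (hH.comp (contDiff_const_smul _)).const_smul _
    exact (ContDiffOn.comp_contDiff (hf.mono hsub) hg hmem : _)
  · intro x hx
    have hxn : ‖(N / ε) • x‖ < n := by
      rw [norm_smul, Real.norm_eq_abs, abs_of_pos (div_pos hN hε)]
      calc N / ε * ‖x‖ < N / ε * (ε * n / N) :=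
            mul_lt_mul_of_pos_left hx (div_pos hN hε)
        _ = n := by field_simp
    rw [hHid _ hxn, smul_smul]
    norm_num [div_mul_div_comm, mul_comm ε N, div_self (by positivity : N * ε ≠ 0)]
end

section
/- Let X be a Banach space possessing a C^q-blid map H, and let π : X → X be a bounded linear projector (π ∘ π = π). Then the map x ↦ π(H(x)) restricted to the range of π is a C^q-blid map on the closed subspace Im(π), and the map x ↦ H(x) − π(H(x)) restricted to Ker(π) is a C^q-blid map on Ker(π). -/
theorem stmt_5
    {X : Type*} [NormedAddCommGroup X] [NormedSpace ℝ X] [CompleteSpace X]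
    (q : ℕ∞) (H : X → X) (hH : ContDiff ℝ q H)
    (hHbdd : ∃ C : ℝ, ∀ x, ‖H x‖ ≤ C)
    (hHid : ∃ V ∈ nhds (0 : X), ∀ x ∈ V, H x = x)
    (π : X →L[ℝ] X) (hπ : ∀ y, π (π y) = π y) :
    (ContDiff ℝ q (fun x : LinearMap.range (π : X →ₗ[ℝ] X) =>
        (⟨π (H x), LinearMap.mem_range_self _ _⟩ : LinearMap.range (π : X →ₗ[ℝ] X))) ∧
      (∃ C : ℝ, ∀ x : LinearMap.range (π : X →ₗ[ℝ] X), ‖π (H x)‖ ≤ C) ∧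
      (∃ V ∈ nhds (0 : LinearMap.range (π : X →ₗ[ℝ] X)), ∀ x ∈ V,
        (⟨π (H x), LinearMap.mem_range_self _ _⟩ : LinearMap.range (π : X →ₗ[ℝ] X)) = x)) ∧
    (ContDiff ℝ q (fun x : LinearMap.ker (π : X →ₗ[ℝ] X) =>
        (⟨H x - π (H x), by simp [LinearMap.mem_ker, map_sub, hπ]⟩ : LinearMap.ker (π : X →ₗ[ℝ] X))) ∧
      (∃ C : ℝ, ∀ x : LinearMap.ker (π : X →ₗ[ℝ] X), ‖H x - π (H x)‖ ≤ C) ∧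
      (∃ V ∈ nhds (0 : LinearMap.ker (π : X →ₗ[ℝ] X)), ∀ x ∈ V,
        (⟨H x - π (H x), by simp [LinearMap.mem_ker, map_sub, hπ]⟩ : LinearMap.ker (π : X →ₗ[ℝ] X)) = x)) := by
  obtain ⟨C, hC⟩ := hHbdd
  obtain ⟨V, hV, hVid⟩ := hHid
  constructor
  · refine ⟨?_, ⟨‖π‖ * C, fun x => ?_⟩, ?_⟩
    · have T : X →L[ℝ] LinearMap.range (π : X →ₗ[ℝ] X) :=
        π.codRestrict (LinearMap.range (π : X →ₗ[ℝ] X)) (fun x => LinearMap.mem_range_self _ x)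
      exact ((π.codRestrict (LinearMap.range (π : X →ₗ[ℝ] X))
        (fun x => LinearMap.mem_range_self _ x)).contDiff.comp
        (hH.comp (LinearMap.range (π : X →ₗ[ℝ] X)).subtypeL.contDiff))
    · calc ‖π (H x)‖ ≤ ‖π‖ * ‖H x‖ := π.le_opNorm _
        _ ≤ ‖π‖ * C := by
            exact mul_le_mul_of_nonneg_left (hC _) (norm_nonneg _)
    · refine ⟨Subtype.val ⁻¹' V, ?_, ?_⟩
      · exact continuous_subtype_val.continuousAt.preimage_mem_nhds (by simpa using hV)
      · rintro ⟨x, hx⟩ hxV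
        obtain ⟨y, hy⟩ := hx
        have h1 : H x = x := hVid _ hxV
        have h2 : π x = x := by rw [← hy]; exact hπ y
        exact Subtype.ext (by simp [h1, h2])
  · refine ⟨?_, ⟨(1 + ‖π‖) * C, fun x => ?_⟩, ?_⟩
    · exact (((ContinuousLinearMap.id ℝ X - π).codRestrict (LinearMap.ker (π : X →ₗ[ℝ] X))
        (fun x => by simp [LinearMap.mem_ker, map_sub, hπ])).contDiff.comp
        (hH.comp (LinearMap.ker (π : X →ₗ[ℝ] X)).subtypeL.contDiff))
    · calc ‖H x - π (H x)‖ ≤ ‖H x‖ + ‖π (H x)‖ := norm_sub_le _ _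
        _ ≤ ‖H x‖ + ‖π‖ * ‖H x‖ := by linarith [π.le_opNorm (H x.val)]
        _ = (1 + ‖π‖) * ‖H x‖ := by ring
        _ ≤ (1 + ‖π‖) * C := by
            exact mul_le_mul_of_nonneg_left (hC _)
              (by positivity)
    · refine ⟨Subtype.val ⁻¹' V, ?_, ?_⟩
      · exact continuous_subtype_val.continuousAt.preimage_mem_nhds (by simpa using hV)
      · rintro ⟨x, hx⟩ hxV
        have h1 : H x = x := hVid _ hxV
        have h2 : π x = 0 := hx
        exact Subtype.ext (by simp [h1, h2])
end
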